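/- arXiv:1902.03702 — 12 statements merged into one kernel-verified Lean document; each statement's English description precedes it below -/
import Mathlib

section
/- For all positive integers n and k with k·2^k ≤ √n, there exists an (n,k)-universal set of size at most n. -/
lemma exp_lemma {r : ℝ} (hr : 8 ≤ r) : 2 * r ^ 2 < Real.exp r := by
  have h1 : (1 + r/8) ≤ Real.exp (r/8) := by
    have := Real.add_one_le_exp (r/8); linarith
  have h0 : (0:ℝ) ≤ 1 + r/8 := by linarith
  have h2 : (1 + r/8)^8 ≤ Real.exp r := by
    calc (1 + r/8)^8 ≤ Real.exp (r/8)^8 := pow_le_pow_left₀ h0 h1 8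
      _ = Real.exp r := by rw [← Real.exp_nat_mul]; ring_nf
  have hsq : 4 * (r/8) ≤ (1 + r/8)^2 := by nlinarith [sq_nonneg (1 - r/8)]
  have h4 : (4*(r/8))^4 ≤ ((1 + r/8)^2)^4 :=
    pow_le_pow_left₀ (by linarith) hsq 4
  have h3 : 2 * r^2 < (1 + r/8)^8 := by nlinarith [h4, sq_nonneg r]
  linarith

lemma two_mul_lt {m : ℕ} (hm : 4 ≤ m) : 2 * m < 2 ^ m := by
  induction m with
  | zero => omega
  | succ p ih =>
    rcases Nat.lt_or_ge p 4 with hp | hp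
    · have hp3 : p = 3 := by omega
      subst hp3; norm_num
    · have := ih (by omega)
      have h2 : 2 ^ p ≥ 2 := Nat.one_lt_two_pow (by omega)
      rw [pow_succ]; omega

lemma key_ineq (n k : ℕ) (hk : 0 < k) (hsq : (k * 2 ^ k) ^ 2 ≤ n) :
    n.choose k * 2 ^ k * (2 ^ k - 1) ^ n < 2 ^ (k * n) := by
  rcases Nat.lt_or_ge k 2 with h1 | h2
  · -- k = 1
    have hk1 : k = 1 := by omega
    subst hk1
    have hn4 : 4 ≤ n := by simpa using hsq
    have := two_mul_lt hn4
    simpa [Nat.mul_comm] using this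
  · -- k ≥ 2 : cast to ℝ
    have hkn : (1:ℕ) ≤ 2 ^ k := Nat.one_le_two_pow
    have goalR : (n.choose k : ℝ) * 2 ^ k * ((2:ℝ) ^ k - 1) ^ n < 2 ^ (k * n) := by
      set K : ℝ := (2:ℝ) ^ k with hK
      have hKpos : (0:ℝ) < K := by positivity
      have hK1 : (1:ℝ) ≤ K := one_le_pow₀ (by norm_num)
      set t : ℝ := (k:ℝ) * 2 ^ k with ht
      have ht8 : (8:ℝ) ≤ t := by
        have : (8:ℕ) ≤ k * 2 ^ k :=
          le_trans (by norm_num) (Nat.mul_le_mul h2 (Nat.pow_le_pow_right (by norm_num) h2))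
        calc (8:ℝ) ≤ ((k * 2^k : ℕ) : ℝ) := by exact_mod_cast this
          _ = t := by push_cast [ht]; ring
      have htpos : (0:ℝ) < t := by linarith
      have htn : t ^ 2 ≤ (n:ℝ) := by
        have : ((k * 2 ^ k) ^ 2 : ℕ) ≤ (n : ℕ) := hsq
        calc t ^ 2 = ((( k * 2 ^ k) ^ 2 : ℕ) : ℝ) := by push_cast; ring
          _ ≤ (n:ℝ) := by exact_mod_cast this
      set r : ℝ := (n:ℝ) / t with hr
      have hrt : t ≤ r := by
        rw [hr, le_div_iff₀ htpos]; nlinarith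
      have hr8 : (8:ℝ) ≤ r := le_trans ht8 hrt
      have hnrt : (n:ℝ) = r * t := by rw [hr, div_mul_cancel₀ _ htpos.ne']
      -- (K-1)^n ≤ K^n * exp(-1/K)^n
      have hbase : K - 1 ≤ K * Real.exp (-(1/K)) := by
        have := Real.add_one_le_exp (-(1/K))
        have h' : 1 - 1/K ≤ Real.exp (-(1/K)) := by linarith
        have := mul_le_mul_of_nonneg_left h' (le_of_lt hKpos)
        calc K - 1 = K * (1 - 1/K) := by field_simp
          _ ≤ K * Real.exp (-(1/K)) := this
      have hpow : (K - 1) ^ n ≤ (K * Real.exp (-(1/K))) ^ n :=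
        pow_le_pow_left₀ (by linarith) hbase n
      have hexp_eq : Real.exp (-(1/K)) ^ n = Real.exp (-((n:ℝ)/K)) := by
        rw [← Real.exp_nat_mul]; congr 1; field_simp
      -- main scalar bound
      have hmain : (n:ℝ) ^ k * K * Real.exp (-((n:ℝ)/K)) < 1 := by
        have hexp_pos : (0:ℝ) < Real.exp ((n:ℝ)/K) := Real.exp_pos _
        rw [Real.exp_neg]
        rw [mul_inv_lt_iff₀ hexp_pos, one_mul]
        have hnK : (n:ℝ)/K = (k:ℝ) * r := by
          rw [hnrt, ht]; field_simp; ring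
        have h2n : 2 * (n:ℝ) < Real.exp r := by
          have : 2 * (n:ℝ) ≤ 2 * r^2 := by nlinarith
          linarith [exp_lemma hr8]
        calc (n:ℝ)^k * K = (2 * (n:ℝ))^k := by rw [hK, mul_pow]; ring
          _ < (Real.exp r)^k := by
              apply pow_lt_pow_left₀ h2n (by positivity) (by omega)
          _ = Real.exp ((n:ℝ)/K) := by rw [hnK, Real.exp_nat_mul]
      have hchoose : (n.choose k : ℝ) ≤ (n:ℝ) ^ k := by
        calc (n.choose k : ℝ) ≤ (n:ℝ)^k / (Nat.factorial k : ℝ) := Nat.choose_le_pow_div k n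
          _ ≤ (n:ℝ)^k := by
              apply div_le_self (by positivity)
              exact_mod_cast Nat.one_le_iff_ne_zero.mpr (Nat.factorial_ne_zero k)
      have hKn : (2:ℝ) ^ (k*n) = K ^ n := by rw [hK, ← pow_mul]
      rw [hKn]
      calc (n.choose k : ℝ) * K * (K - 1) ^ n
          ≤ (n:ℝ)^k * K * ((K * Real.exp (-(1/K))) ^ n) := by
            apply mul_le_mul (mul_le_mul_of_nonneg_right hchoose (le_of_lt hKpos)) hpow
            · exact pow_nonneg (by linarith) n
            · positivity
        _ = ((n:ℝ)^k * K * Real.exp (-((n:ℝ)/K))) * K ^ n := by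
            rw [mul_pow, hexp_eq]; ring
        _ < 1 * K ^ n := by
            apply mul_lt_mul_of_pos_right hmain (by positivity)
        _ = K ^ n := one_mul _
    -- transfer to ℕ
    rw [← Nat.cast_lt (α := ℝ)]
    have hc : ((2 ^ k - 1 : ℕ) : ℝ) = (2:ℝ) ^ k - 1 := by
      push_cast [hkn]; ring
    push_cast [hc]
    exact goalR


/-- For all positive integers `n` and `k` with `k·2^k ≤ √n`, there exists an
`(n,k)`-universal set of size at most `n`.  An `(n,k)`-universal set is a set `S` of binary
strings of length `n` such that for every set `I` of `k` coordinates and every binary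
pattern `g` on those coordinates, some string `s ∈ S` agrees with `g` on `I`. -/
theorem universal_set_exists (n k : ℕ) (hn : 0 < n) (hk : 0 < k)
    (h : (k * 2 ^ k : ℝ) ≤ Real.sqrt n) :
    ∃ S : Finset (Fin n → Bool), S.card ≤ n ∧
      ∀ I : Finset (Fin n), I.card = k →
        ∀ g : Fin n → Bool, ∃ s ∈ S, ∀ i ∈ I, s i = g i := by
  classical
  have hsqn : (k * 2 ^ k) ^ 2 ≤ n := by
    have h0 : (0:ℝ) ≤ (k * 2^k : ℝ) := by positivity
    have h1 := pow_le_pow_left₀ h0 h 2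
    rw [Real.sq_sqrt (by positivity)] at h1
    exact_mod_cast h1
  have hkle : k ≤ n := by
    have h1 : k ≤ k * 2 ^ k := Nat.le_mul_of_pos_right k (by positivity)
    have h2 : k * 2 ^ k ≤ (k * 2 ^ k) ^ 2 := Nat.le_self_pow (by norm_num) _
    omega
  -- the finset of strings agreeing with g on I
  set A : Finset (Fin n) → (Fin n → Bool) → Finset (Fin n → Bool) :=
    fun I g => Finset.univ.filter (fun s => ∀ i ∈ I, s i = g i) with hA
  -- bad sequences of strings: every member disagrees with g somewhere on I
  set Bad : Finset (Fin n) → (Fin n → Bool) → Finset (Fin n → Fin n → Bool) :=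
    fun I g => Fintype.piFinset (fun _ => (A I g)ᶜ) with hBad
  -- canonical patterns supported on I
  set P : Finset (Fin n) → Finset (Fin n → Bool) :=
    fun I => Fintype.piFinset
      (fun i => if i ∈ I then (Finset.univ : Finset Bool) else {false}) with hP
  set BigBad := (Finset.powersetCard k (Finset.univ : Finset (Fin n))).biUnion
    (fun I => (P I).biUnion (fun g => Bad I g)) with hBB
  have cardA : ∀ (I : Finset (Fin n)) (g : Fin n → Bool), I.card = k →
      (A I g).card = 2 ^ (n - k) := by
    intro I g hI
    have : A I g = Fintype.piFinset
        (fun i => if i ∈ I then ({g i} : Finset Bool) else Finset.univ) := by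
      ext s
      simp only [hA, Finset.mem_filter, Finset.mem_univ, true_and, Fintype.mem_piFinset]
      constructor
      · intro hs i
        by_cases hi : i ∈ I
        · simp [hi, hs i hi]
        · simp [hi]
      · intro hs i hi
        have := hs i
        rw [if_pos hi] at this
        simpa using this
    rw [this, Fintype.card_piFinset]
    have : ∀ i : Fin n, (if i ∈ I then ({g i} : Finset Bool) else Finset.univ).card
        = if i ∈ I then 1 else 2 := by
      intro i; split_ifs <;> simp
    rw [Finset.prod_congr rfl (fun i _ => this i), Finset.prod_ite]
    simp only [Finset.prod_const]
    rw [Finset.filter_univ_mem]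
    have hco : (Finset.univ.filter (fun i => ¬ i ∈ I)).card = n - k := by
      rw [← Finset.compl_filter, Finset.card_compl, Finset.filter_univ_mem, hI]
      simp
    rw [hco, hI]
    simp
  have cardBad : ∀ (I : Finset (Fin n)) (g : Fin n → Bool), I.card = k →
      (Bad I g).card = (2 ^ n - 2 ^ (n - k)) ^ n := by
    intro I g hI
    rw [hBad]
    simp only [Fintype.card_piFinset, Finset.prod_const, Finset.card_univ, Fintype.card_fin]
    congr 1
    rw [Finset.card_compl, cardA I g hI]
    congr 1
    simp [Fintype.card_fun]
  have cardP : ∀ I : Finset (Fin n), I.card = k → (P I).card = 2 ^ k := by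
    intro I hI
    rw [hP]
    simp only [Fintype.card_piFinset]
    have : ∀ i : Fin n, (if i ∈ I then (Finset.univ : Finset Bool) else {false}).card
        = if i ∈ I then 2 else 1 := by
      intro i; split_ifs <;> simp
    rw [Finset.prod_congr rfl (fun i _ => this i), Finset.prod_ite]
    simp only [Finset.prod_const]
    rw [Finset.filter_univ_mem, hI]
    simp
  have hcardlt : BigBad.card < Fintype.card (Fin n → Fin n → Bool) := by
    have hb1 : BigBad.card ≤ n.choose k * (2 ^ k * (2 ^ n - 2 ^ (n - k)) ^ n) := by
      rw [hBB]
      refine le_trans (Finset.card_biUnion_le) ?_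
      have hbound : ∀ I ∈ Finset.powersetCard k (Finset.univ : Finset (Fin n)),
          ((P I).biUnion (fun g => Bad I g)).card ≤ 2 ^ k * (2 ^ n - 2 ^ (n - k)) ^ n := by
        intro I hI
        have hIk : I.card = k := (Finset.mem_powersetCard_univ.mp hI)
        refine le_trans (Finset.card_biUnion_le) ?_
        have heq : ∑ g ∈ P I, (Bad I g).card = 2 ^ k * (2 ^ n - 2 ^ (n - k)) ^ n := by
          rw [Finset.sum_congr rfl (fun g _ => cardBad I g hIk), Finset.sum_const,
            smul_eq_mul, cardP I hIk]
        omega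
      calc ∑ I ∈ Finset.powersetCard k Finset.univ, ((P I).biUnion (fun g => Bad I g)).card
          ≤ ∑ I ∈ Finset.powersetCard k (Finset.univ : Finset (Fin n)),
              2 ^ k * (2 ^ n - 2 ^ (n - k)) ^ n := Finset.sum_le_sum hbound
        _ = n.choose k * (2 ^ k * (2 ^ n - 2 ^ (n - k)) ^ n) := by
            rw [Finset.sum_const, smul_eq_mul, Finset.card_powersetCard]
            simp
    have hsplit : 2 ^ n - 2 ^ (n - k) = 2 ^ (n - k) * (2 ^ k - 1) := by
      rw [Nat.mul_sub, mul_one, ← pow_add, Nat.sub_add_cancel hkle]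
    have hb2 : n.choose k * (2 ^ k * (2 ^ n - 2 ^ (n - k)) ^ n) < 2 ^ (n * n) := by
      rw [hsplit, mul_pow, ← mul_assoc, ← mul_assoc]
      have hkey := key_ineq n k hk hsqn
      calc n.choose k * 2 ^ k * (2 ^ (n - k)) ^ n * (2 ^ k - 1) ^ n
          = (n.choose k * 2 ^ k * (2 ^ k - 1) ^ n) * 2 ^ ((n - k) * n) := by
            rw [← pow_mul]; ring
        _ < 2 ^ (k * n) * 2 ^ ((n - k) * n) := by
            exact mul_lt_mul_of_pos_right hkey (by positivity)
        _ = 2 ^ (n * n) := by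
            rw [← pow_add, ← Nat.add_mul, Nat.add_sub_cancel' hkle]
    calc BigBad.card ≤ n.choose k * (2 ^ k * (2 ^ n - 2 ^ (n - k)) ^ n) := hb1
      _ < 2 ^ (n * n) := hb2
      _ = Fintype.card (Fin n → Fin n → Bool) := by
          simp [Fintype.card_fun]
          rw [← pow_mul]
  rw [← Finset.card_univ] at hcardlt
  have hss : BigBad ⊂ Finset.univ := Finset.ssubset_univ_iff.mpr
    (fun hcon => absurd hcardlt (by rw [hcon]; exact lt_irrefl _))
  obtain ⟨f, -, hf⟩ := Finset.exists_of_ssubset hss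
  refine ⟨Finset.image f Finset.univ, ?_, ?_⟩
  · calc (Finset.image f Finset.univ).card ≤ (Finset.univ : Finset (Fin n)).card :=
        Finset.card_image_le
      _ = n := by simp
  · intro I hI g
    set g' : Fin n → Bool := fun i => if i ∈ I then g i else false with hg'
    have hg'P : g' ∈ P I := by
      rw [hP, Fintype.mem_piFinset]
      intro i
      by_cases hi : i ∈ I <;> simp [hg', hi]
    have hIP : I ∈ Finset.powersetCard k (Finset.univ : Finset (Fin n)) :=
      Finset.mem_powersetCard_univ.mpr hI
    have hnotbad : f ∉ Bad I g' := by
      intro hcon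
      exact hf (Finset.mem_biUnion.mpr ⟨I, hIP, Finset.mem_biUnion.mpr ⟨g', hg'P, hcon⟩⟩)
    rw [hBad, Fintype.mem_piFinset] at hnotbad
    push_neg at hnotbad
    obtain ⟨j, hj⟩ := hnotbad
    rw [Finset.notMem_compl, hA, Finset.mem_filter] at hj
    refine ⟨f j, Finset.mem_image_of_mem f (Finset.mem_univ j), ?_⟩
    intro i hi
    have := hj.2 i hi
    rw [this]
    simp [hg', hi]
end

section
/- Given a matrix M with m rows and n columns and entries in a set of size h, and a positive integer k, define the bipartite graph T(M) = (A, B, E_T): A is the disjoint union of A_1, …, A_m where each A_i is a copy of [h]^k; B is the disjoint union of B_1, …, B_k where each B_j is a copy of [n]; a vertex ā ∈ A_i is adjacent to a vertex b ∈ B_j iff M_{i,b} = ā[j]. Suppose M satisfies property (M2) for h: for every set C of columns with |C| ≤ h there exists a row r ∈ [m] such that the entries M_{r,c}, c ∈ C, are pairwise distinct. Then T(M) satisfies property (G4): for every X ⊆ B and all choices ā_1 ∈ A_1, …, ā_m ∈ A_m, if every ā_i has at least k+1 neighbors in X, then |X| > h. -/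
/-! If `|X| ≤ h`, then `X` meets at most `h` columns, so by (M2) some row `r` is injective on
them. A neighbour `(j, b)` of `ā_r` satisfies `M r b = ā_r j`, so its block `j` determines `b`:
`ā_r` has at most one neighbour in `X` per block, hence at most `k`. -/

theorem Finset.card_filter_snd_eq_fst_le {α β γ : Type*} [Fintype α] [DecidableEq γ]
    (X : Finset (α × β)) (f : β → γ) (g : α → γ)
    (hf : Set.InjOn f (Prod.snd '' (X : Set (α × β)))) :
    (X.filter fun p => f p.2 = g p.1).card ≤ Fintype.card α := by
  refine Finset.card_le_card_of_injOn Prod.fst (fun _ _ => Finset.mem_coe.2 (Finset.mem_univ _)) ?_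
  rintro p hp q hq hfst
  simp only [Finset.coe_filter, Set.mem_ofPred_eq] at hp hq
  have hsnd : p.2 = q.2 :=
    hf (Set.mem_image_of_mem _ hp.1) (Set.mem_image_of_mem _ hq.1)
      (by rw [hp.2, hq.2, hfst])
  exact Prod.ext hfst hsnd

theorem TM_satisfies_G4_general (m n h k : ℕ)
    (M : Fin m → Fin n → Fin h)
    (hM2 : ∀ C : Finset (Fin n), C.card ≤ h →
      ∃ r : Fin m, ∀ c ∈ C, ∀ c' ∈ C, M r c = M r c' → c = c') :
    ∀ (X : Finset (Fin k × Fin n)) (a : Fin m → (Fin k → Fin h)),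
      (∀ i : Fin m, k + 1 ≤ (X.filter (fun p => M i p.2 = a i p.1)).card) →
      h < X.card := by
  intro X a hdeg
  by_contra! hX
  obtain ⟨r, hr⟩ := hM2 (X.image Prod.snd) (Finset.card_image_le.trans hX)
  have hle := Finset.card_filter_snd_eq_fst_le X (M r) (a r) <| by
    rw [← Finset.coe_image]; exact fun c hc c' hc' => hr c hc c' hc'
  rw [Fintype.card_fin] at hle
  exact absurd (hdeg r) (by omega)

/-- For a matrix `M` with `m` rows, `n` columns and entries in `[h]`, the
bipartite graph `T(M)` has side `A = ⋃_{i∈[m]} A_i` with `A_i = [h]^k` and side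
`B = ⋃_{j∈[k]} B_j` with `B_j = [n]` (a vertex of `B` is a pair `(j, b)`), where
`ā ∈ A_i` is adjacent to `(j, b)` iff `M i b = ā j`.  If `M` satisfies (M2) for `h`
(for every set `C` of at most `h` columns some row is injective on `C`), then `T(M)`
satisfies (G4): for every `X ⊆ B` and all `ā_1 ∈ A_1, …, ā_m ∈ A_m`, if every `ā_i`
has at least `k+1` neighbors in `X`, then `|X| > h`. -/
theorem TM_satisfies_G4 (m n h k : ℕ) (hm : 0 < m) (hn : 0 < n) (hh : 0 < h) (hk : 0 < k)
    (M : Fin m → Fin n → Fin h)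
    (hM2 : ∀ C : Finset (Fin n), C.card ≤ h →
      ∃ r : Fin m, ∀ c ∈ C, ∀ c' ∈ C, M r c = M r c' → c = c') :
    ∀ (X : Finset (Fin k × Fin n)) (a : Fin m → (Fin k → Fin h)),
      (∀ i : Fin m, k + 1 ≤ (X.filter (fun p => M i p.2 = a i p.1)).card) →
      h < X.card :=
  TM_satisfies_G4_general m n h k M hM2
end

section
/- For every positive integer k, every t ≥ 1 with h = 2^t, and every positive integer n such that (h·t)·2^{h·t} ≤ √(n·t), there exists a (k, n, n·t, h^k, h)-gap-gadget. (The hypothesis (h·t)·2^{h·t} ≤ √(n·t) is implied by the paper's conditions k·log log n ≤ log n and h ≤ log n / ((2+ε)·log log n) for sufficiently large h.) -/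
/-- A `(k,n,m,ℓ,h)`-gap-gadget: a bipartite graph `T = (A, B, E_T)` where
`A = ⋃_{i∈[m]} A_i` with `|A_i| = ℓ` (a vertex of `A` is a pair `(i, a)` with `a ∈ Fin ℓ`),
`B = ⋃_{j∈[k]} B_j` with `|B_j| = n` (a vertex of `B` is a pair `(j, b)` with `b ∈ Fin n`),
satisfying:
(G3) for all `b_1 ∈ B_1, …, b_k ∈ B_k` there exist `a_1 ∈ A_1, …, a_m ∈ A_m` such that
`a_i` is adjacent to `b_j` for all `i ∈ [m]`, `j ∈ [k]`;
(G4) for every `X ⊆ B` and all `a_1 ∈ A_1, …, a_m ∈ A_m`, if every `a_i` has at least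
`k+1` neighbors in `X`, then `|X| > h`. -/
structure GapGadget (k n m ℓ h : ℕ) where
  adj : Fin m × Fin ℓ → Fin k × Fin n → Bool
  g3 : ∀ b : Fin k → Fin n, ∃ a : Fin m → Fin ℓ,
    ∀ (i : Fin m) (j : Fin k), adj (i, a i) (j, b j) = true
  g4 : ∀ (X : Finset (Fin k × Fin n)) (a : Fin m → Fin ℓ),
    (∀ i : Fin m, k + 1 ≤ (X.filter (fun p => adj (i, a i) p = true)).card) →
    h < X.card

open Finset


lemma aux_log_lt_sqrt {x : ℝ} (hx : 1 ≤ x) : Real.log x < Real.sqrt x := by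
  have hs : 1 ≤ Real.sqrt x := by
    rw [show (1:ℝ) = Real.sqrt 1 by simp]
    exact Real.sqrt_le_sqrt hx
  have h0 : 0 < Real.sqrt x / 2 := by linarith
  have h1 : Real.log (Real.sqrt x / 2) ≤ Real.sqrt x / 2 - 1 :=
    Real.log_le_sub_one_of_pos h0
  have h2 : Real.log (Real.sqrt x / 2) = Real.log (Real.sqrt x) - Real.log 2 := by
    rw [Real.log_div (by linarith) (by norm_num)]
  have h3 : Real.log (Real.sqrt x) = Real.log x / 2 := Real.log_sqrt (by linarith)
  have h4 : Real.log 2 < 0.6931471808 := Real.log_two_lt_d9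
  rw [h2, h3] at h1
  linarith

lemma aux_key (t n : ℕ) (ht : 1 ≤ t) (hn : 0 < n)
    (hcond : ((2 ^ t * t) * 2 ^ (2 ^ t * t) : ℝ) ≤ Real.sqrt (n * t)) :
    (2:ℝ) ^ t * 2 ^ (2 ^ t * t) * Real.log n < n * t := by
  set s : ℝ := Real.sqrt (n * t) with hs
  have hnt0 : (0:ℝ) ≤ (n : ℝ) * t := by positivity
  have hs2 : s * s = n * t := Real.mul_self_sqrt hnt0
  have hT : (0:ℝ) < (t:ℝ) := by exact_mod_cast ht
  have hT1 : (1:ℝ) ≤ (t:ℝ) := by exact_mod_cast ht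
  have hs0 : (0:ℝ) < s :=
    lt_of_lt_of_le (by { apply mul_pos; apply mul_pos; positivity; exact hT; positivity }) hcond
  have hA : (2:ℝ) ^ t * 2 ^ (2 ^ t * t) ≤ s := by
    nlinarith [hcond, pow_pos (by norm_num : (0:ℝ) < 2) t,
      pow_pos (by norm_num : (0:ℝ) < 2) (2 ^ t * t)]
  have hL0 : 0 ≤ Real.log n := Real.log_nonneg (by exact_mod_cast hn)
  have hLs : Real.log n < s := by
    have h1 : Real.log n < Real.sqrt n := aux_log_lt_sqrt (by exact_mod_cast hn)
    have h2 : Real.sqrt n ≤ s :=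
      Real.sqrt_le_sqrt (by nlinarith [(Nat.one_le_cast (α := ℝ)).mpr hn])
    linarith
  nlinarith

lemma aux_real (t n : ℕ) (ht : 1 ≤ t) (hn : 0 < n)
    (hcond : ((2 ^ t * t) * 2 ^ (2 ^ t * t) : ℝ) ≤ Real.sqrt (n * t)) :
    (n:ℝ) ^ (2 ^ t) * (1 - ((2:ℝ) ^ (2 ^ t * t))⁻¹) ^ (n * t) < 1 := by
  have key := aux_key t n ht hn hcond
  set q : ℝ := ((2:ℝ) ^ (2 ^ t * t))⁻¹ with hq
  have hP : (1:ℝ) ≤ 2 ^ (2 ^ t * t) := one_le_pow₀ (by norm_num)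
  have hq0 : 0 < q := by positivity
  have hq1 : q ≤ 1 := by rw [hq]; exact inv_le_one_of_one_le₀ hP
  have h1 : (1 - q) ^ (n * t) ≤ Real.exp (-q) ^ (n * t) :=
    pow_le_pow_left₀ (by linarith) (by nlinarith [Real.add_one_le_exp (-q)]) _
  have h2 : Real.exp (-q) ^ (n * t) = Real.exp (-(q * (n * t))) := by
    rw [← Real.exp_nat_mul]; push_cast; ring_nf
  have h3 : (n:ℝ) ^ (2 ^ t) = Real.exp ((2 ^ t : ℕ) * Real.log n) := by
    rw [Real.exp_nat_mul, Real.exp_log (by exact_mod_cast hn)]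
  have h5 : ((2:ℕ) ^ t : ℝ) * Real.log n < q * (n * t) := by
    push_cast
    rw [hq, inv_mul_eq_div, lt_div_iff₀ (by positivity)]
    nlinarith
  calc (n:ℝ) ^ (2 ^ t) * (1 - q) ^ (n * t)
      ≤ (n:ℝ) ^ (2 ^ t) * Real.exp (-(q * (n * t))) := by
        rw [← h2]; exact mul_le_mul_of_nonneg_left h1 (by positivity)
    _ = Real.exp ((2 ^ t : ℕ) * Real.log n - q * (n * t)) := by
        rw [h3, ← Real.exp_add]; ring_nf
    _ < 1 := by
        rw [Real.exp_lt_one_iff]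
        push_cast at h5 ⊢
        linarith

lemma aux_h_le_n (t n : ℕ) (ht : 1 ≤ t) (hn : 0 < n)
    (hcond : ((2 ^ t * t) * 2 ^ (2 ^ t * t) : ℝ) ≤ Real.sqrt (n * t)) :
    2 ^ t ≤ n := by
  set s : ℝ := Real.sqrt (n * t) with hsdef
  have hnt0 : (0:ℝ) ≤ (n : ℝ) * t := by positivity
  have hs2 : s * s = n * t := Real.mul_self_sqrt hnt0
  have hT1 : (1:ℝ) ≤ (t:ℝ) := by exact_mod_cast ht
  have hH1 : (1:ℝ) ≤ (2:ℝ) ^ t := one_le_pow₀ (by norm_num)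
  have hP1 : (1:ℝ) ≤ (2:ℝ) ^ (2 ^ t * t) := one_le_pow₀ (by norm_num)
  have hx0 : (0:ℝ) ≤ (2:ℝ) ^ t * t := by positivity
  have hx1 : (1:ℝ) ≤ (2:ℝ) ^ t * t := by nlinarith
  have h1 : (2:ℝ) ^ t * t ≤ s :=
    le_trans (by nlinarith [mul_le_mul_of_nonneg_left hP1 hx0]) hcond
  have hs1 : (1:ℝ) ≤ s := le_trans hx1 h1
  have h2 : ((2:ℝ) ^ t) * t ≤ (n:ℝ) * t := by
    nlinarith [mul_le_mul_of_nonneg_right hs1 hx0,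
      mul_le_mul_of_nonneg_left h1 (le_trans zero_le_one hs1)]
  have h3 : ((2:ℝ) ^ t) ≤ (n:ℝ) := le_of_mul_le_mul_right h2 (by linarith)
  exact_mod_cast h3

lemma aux_nat (t n : ℕ) (ht : 1 ≤ t) (hn : 0 < n)
    (hcond : ((2 ^ t * t) * 2 ^ (2 ^ t * t) : ℝ) ≤ Real.sqrt (n * t)) :
    Nat.choose n (2 ^ t) * ((2 ^ t) ^ n - (2 ^ t) ^ (n - 2 ^ t)) ^ (n * t)
      < ((2 ^ t) ^ n) ^ (n * t) := by
  have hhn := aux_h_le_n t n ht hn hcond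
  have hreal := aux_real t n ht hn hcond
  have hle : ((2:ℕ) ^ t) ^ (n - 2 ^ t) ≤ ((2:ℕ) ^ t) ^ n :=
    Nat.pow_le_pow_right (Nat.one_le_two_pow) (Nat.sub_le _ _)
  rw [← Nat.cast_lt (α := ℝ)]
  push_cast [Nat.cast_sub hle]
  set H : ℝ := (2:ℝ) ^ t with hH
  set q : ℝ := ((2:ℝ) ^ (2 ^ t * t))⁻¹ with hq
  have hHq : H ^ (2 ^ t) = (2:ℝ) ^ (2 ^ t * t) := by rw [hH, ← pow_mul, mul_comm]
  have hq1 : q ≤ 1 := by rw [hq]; exact inv_le_one_of_one_le₀ (one_le_pow₀ (by norm_num))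
  have key : H ^ (n - 2 ^ t) = H ^ n * q := by
    rw [hq, ← hHq, eq_mul_inv_iff_mul_eq₀ (by positivity), ← pow_add,
      Nat.sub_add_cancel hhn]
  calc (Nat.choose n (2 ^ t) : ℝ) * (H ^ n - H ^ (n - 2 ^ t)) ^ (n * t)
      = (Nat.choose n (2 ^ t) : ℝ) * (1 - q) ^ (n * t) * (H ^ n) ^ (n * t) := by
        rw [key, show H ^ n - H ^ n * q = H ^ n * (1 - q) by ring, mul_pow]; ring
    _ ≤ (n:ℝ) ^ (2 ^ t) * (1 - q) ^ (n * t) * (H ^ n) ^ (n * t) := by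
        apply mul_le_mul_of_nonneg_right _ (by positivity)
        apply mul_le_mul_of_nonneg_right _ (pow_nonneg (by linarith) _)
        exact_mod_cast Nat.choose_le_pow n (2 ^ t)
    _ < 1 * (H ^ n) ^ (n * t) := by
        apply mul_lt_mul_of_pos_right _ (by positivity)
        exact hreal
    _ = (H ^ n) ^ (n * t) := one_mul _

lemma exists_phf (h n m : ℕ) (hh : 0 < h)
    (hnum : Nat.choose n h * (h ^ n - h ^ (n - h)) ^ m < (h ^ n) ^ m) :
    ∃ F : Fin m → Fin n → Fin h, ∀ S : Finset (Fin n), S.card = h →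
      ∃ i, Set.InjOn (F i) ↑S := by
  classical
  by_contra hcon
  push_neg at hcon
  set Bad : Finset (Fin n) → Finset (Fin n → Fin h) :=
    fun S => univ.filter (fun g => ¬ Set.InjOn g ↑S) with hBad
  have hBadCard : ∀ S : Finset (Fin n), S.card = h → (Bad S).card ≤ h ^ n - h ^ (n - h) := by
    intro S hS
    set f₀ : Fin n → Fin h :=
      fun x => if hx : x ∈ S then (S.orderIsoOfFin hS).symm ⟨x, hx⟩ else ⟨0, hh⟩ with hf₀
    set G : Finset (Fin n → Fin h) :=
      Fintype.piFinset (fun x => if x ∈ S then ({f₀ x} : Finset (Fin h)) else univ) with hG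
    have hGinj : ∀ g ∈ G, Set.InjOn g ↑S := by
      intro g hg x hx' y hy' hxy
      have hx : x ∈ S := hx'
      have hy : y ∈ S := hy'
      rw [Fintype.mem_piFinset] at hg
      have hgx := hg x; have hgy := hg y
      rw [if_pos hx, mem_singleton] at hgx
      rw [if_pos hy, mem_singleton] at hgy
      have : f₀ x = f₀ y := by rw [← hgx, ← hgy, hxy]
      rw [hf₀] at this
      simp only [dif_pos hx, dif_pos hy] at this
      have := (S.orderIsoOfFin hS).symm.injective this
      exact Subtype.mk_eq_mk.mp this
    have hGcard : G.card = h ^ (n - h) := by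
      rw [hG, Fintype.card_piFinset]
      have : ∀ x : Fin n,
          (if x ∈ S then ({f₀ x} : Finset (Fin h)) else univ).card
          = if x ∈ S then 1 else h := by
        intro x; split <;> simp
      rw [Finset.prod_congr rfl (fun x _ => this x)]
      rw [← Finset.prod_mul_prod_compl S]
      rw [Finset.prod_ite_of_true (fun x hx => hx),
          Finset.prod_ite_of_false (fun x hx => by simpa using (mem_compl.mp hx))]
      simp [card_compl, hS, Fintype.card_fin]
    have hsub : Bad S ⊆ univ \ G := by
      intro g hg
      rw [hBad, mem_filter] at hg
      rw [mem_sdiff]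
      exact ⟨mem_univ _, fun hgG => hg.2 (hGinj g hgG)⟩
    calc (Bad S).card ≤ (univ \ G).card := card_le_card hsub
      _ = h ^ n - h ^ (n - h) := by
          rw [card_sdiff_of_subset (subset_univ _), hGcard, card_univ]
          simp [Fintype.card_fun]
  have hcov : (univ : Finset (Fin m → Fin n → Fin h)) ⊆
      (powersetCard h (univ : Finset (Fin n))).biUnion
        (fun S => Fintype.piFinset (fun _ : Fin m => Bad S)) := by
    intro F _
    obtain ⟨S, hS, hbad⟩ := hcon F
    rw [mem_biUnion]
    exact ⟨S, mem_powersetCard_univ.mpr hS,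
      Fintype.mem_piFinset.mpr (fun i => mem_filter.mpr ⟨mem_univ _, hbad i⟩)⟩
  have hcount : (h ^ n) ^ m ≤ Nat.choose n h * (h ^ n - h ^ (n - h)) ^ m := by
    calc (h ^ n) ^ m = (univ : Finset (Fin m → Fin n → Fin h)).card := by
          simp [card_univ, Fintype.card_fun]
      _ ≤ _ := card_le_card hcov
      _ ≤ ∑ S ∈ powersetCard h (univ : Finset (Fin n)),
            (Fintype.piFinset (fun _ : Fin m => Bad S)).card := card_biUnion_le
      _ ≤ ∑ S ∈ powersetCard h (univ : Finset (Fin n)), (h ^ n - h ^ (n - h)) ^ m := by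
          apply Finset.sum_le_sum
          intro S hS
          rw [Fintype.card_piFinset, Finset.prod_const, card_univ, Fintype.card_fin]
          exact Nat.pow_le_pow_left (hBadCard S (mem_powersetCard_univ.mp hS)) m
      _ = Nat.choose n h * (h ^ n - h ^ (n - h)) ^ m := by
          rw [Finset.sum_const, card_powersetCard, card_univ, Fintype.card_fin, smul_eq_mul]
  omega

/-- For every positive integer `k`, every `t ≥ 1` with `h = 2^t`, and every
positive integer `n` such that `(h·t)·2^{h·t} ≤ √(n·t)`, there exists a
`(k, n, n·t, h^k, h)`-gap-gadget. -/
theorem gapGadget_exists (k t n : ℕ) (hk : 0 < k) (ht : 1 ≤ t) (hn : 0 < n)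
    (hcond : ((2 ^ t * t) * 2 ^ (2 ^ t * t) : ℝ) ≤ Real.sqrt (n * t)) :
    Nonempty (GapGadget k n (n * t) ((2 ^ t) ^ k) (2 ^ t)) := by
  classical
  obtain ⟨F, hF⟩ := exists_phf (2 ^ t) n (n * t) (by positivity) (aux_nat t n ht hn hcond)
  set dec : Fin ((2 ^ t) ^ k) → (Fin k → Fin (2 ^ t)) :=
    fun a => finFunctionFinEquiv.symm a with hdec
  refine ⟨⟨fun p q => decide (F p.1 q.2 = dec p.2 q.1), ?_, ?_⟩⟩
  · intro b
    refine ⟨fun i => finFunctionFinEquiv (fun j => F i (b j)), fun i j => ?_⟩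
    simp [hdec]
  · intro X a hX
    by_contra hle
    push_neg at hle
    obtain ⟨S, hsub, -, hScard⟩ := Finset.exists_subsuperset_card_eq
      (Finset.subset_univ (X.image Prod.snd))
      (le_trans Finset.card_image_le hle)
      (by simpa using aux_h_le_n t n ht hn hcond)
    obtain ⟨i, hi⟩ := hF S hScard
    have h9 : k + 1 ≤ (X.filter
        (fun p => decide (F i p.2 = dec (a i) p.1) = true)).card := hX i
    have hcard : (X.filter
        (fun p => decide (F i p.2 = dec (a i) p.1) = true)).card ≤ k := by
      refine le_trans
        (Finset.card_le_card_of_injOn Prod.fst (fun p _ => Finset.mem_univ p.1) ?_)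
        (by simp)
      intro p hp q hq hpq
      simp only [coe_filter, Set.mem_setOf_eq, decide_eq_true_eq] at hp hq
      have hp2 : p.2 ∈ (S : Set (Fin n)) :=
        Finset.mem_coe.mpr (hsub (Finset.mem_image_of_mem Prod.snd hp.1))
      have hq2 : q.2 ∈ (S : Set (Fin n)) :=
        Finset.mem_coe.mpr (hsub (Finset.mem_image_of_mem Prod.snd hq.1))
      have heq : F i p.2 = F i q.2 := by rw [hp.2, hq.2, hpq]
      exact Prod.ext hpq (hi hp2 hq2 heq)
    omega
end

section
/- Let I = (S, U, E) be a set cover instance with S partitioned into S_1, …, S_k, and let T = (A, B, E_T) be a bipartite graph with A partitioned into A_1, …, A_m and B partitioned into B_1, …, B_k, where B_j is identified with S_j for each j ∈ [k]. Suppose T satisfies property (G3): for all b_1 ∈ B_1, …, b_k ∈ B_k there exist a_1 ∈ A_1, …, a_m ∈ A_m such that a_i is adjacent to b_j for all i ∈ [m], j ∈ [k]. If there exist s_1 ∈ S_1, …, s_k ∈ S_k such that {s_1, …, s_k} covers U in I, then {s_1, …, s_k} covers U' in the product instance I'; in particular opt(I') ≤ k. -/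
/-- Let `I = (S, U, E)` be a set cover instance with `S` partitioned into
`S_1, …, S_k` (modelled as `S = Σ j, Sfam j`), and let `T = (A, B, E_T)` be a bipartite
graph with `A` partitioned into `A_1, …, A_m` (modelled as `Σ i, Afam i`) and `B_j`
identified with `S_j`.  Suppose `T` satisfies (G3).  The product instance `I'` has the
same left side `S`, universe `U' = Σ i, (Afam i → U)`, and `s` is adjacent to
`⟨i, f⟩ ∈ U'` iff there is `a ∈ A_i` with `{a, s} ∈ E_T` and `{s, f a} ∈ E`.
If there exist `s_1 ∈ S_1, …, s_k ∈ S_k` covering `U` in `I`, then `{s_1, …, s_k}`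
covers `U'` in `I'`; in particular `opt(I') ≤ k`. -/
theorem product_completeness
    (k m : ℕ) (Sfam : Fin k → Type) (U : Type)
    (E : (Σ j, Sfam j) → U → Prop)
    (Afam : Fin m → Type)
    (ET : (Σ i, Afam i) → (Σ j, Sfam j) → Prop)
    (hG3 : ∀ b : ∀ j, Sfam j, ∃ a : ∀ i, Afam i,
      ∀ (i : Fin m) (j : Fin k), ET ⟨i, a i⟩ ⟨j, b j⟩)
    (s : ∀ j, Sfam j)
    (hcov : ∀ u : U, ∃ j : Fin k, E ⟨j, s j⟩ u) :
    (∀ u' : Σ i, (Afam i → U), ∃ j : Fin k,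
        ∃ a : Afam u'.1, ET ⟨u'.1, a⟩ ⟨j, s j⟩ ∧ E ⟨j, s j⟩ (u'.2 a)) ∧
    ∃ C : Finset (Σ j, Sfam j), C.card ≤ k ∧
      ∀ u' : Σ i, (Afam i → U), ∃ c ∈ C,
        ∃ a : Afam u'.1, ET ⟨u'.1, a⟩ c ∧ E c (u'.2 a) := by
  classical
  have key : ∀ u' : Σ i, (Afam i → U), ∃ j : Fin k,
      ∃ a : Afam u'.1, ET ⟨u'.1, a⟩ ⟨j, s j⟩ ∧ E ⟨j, s j⟩ (u'.2 a) := by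
    rintro ⟨i, f⟩
    obtain ⟨a, ha⟩ := hG3 s
    obtain ⟨j, hj⟩ := hcov (f (a i))
    exact ⟨j, a i, ha i j, hj⟩
  refine ⟨key, Finset.univ.image (fun j => (⟨j, s j⟩ : Σ j, Sfam j)), ?_, ?_⟩
  · exact (Finset.card_image_le).trans (by simp)
  · intro u'
    obtain ⟨j, a, h1, h2⟩ := key u'
    exact ⟨⟨j, s j⟩, Finset.mem_image_of_mem _ (Finset.mem_univ j), a, h1, h2⟩
end

section
/- Let I = (S, U, E) be a set cover instance with S partitioned into S_1, …, S_k, let T = (A, B, E_T) be a bipartite graph with A partitioned into A_1, …, A_m and B partitioned into B_1, …, B_k where B_j is identified with S_j, and let I' be the product instance. Suppose that no subset of S of cardinality at most k covers U in I. Then for every X ⊆ S that covers U' in I' and every i ∈ [m], there exists a vertex a ∈ A_i having at least k+1 neighbors (in T) in X. -/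
/-! A cover of the product instance restricts, for each block `A_i`, to a cover of `U` by the
`T`-neighbourhood in `X` of a single vertex `a ∈ A_i`: otherwise choose for every `a` an element
`f a ∈ U` missed by that neighbourhood, and then the element `f ∈ U^{A_i}` of the product
universe is not covered. Since no `k` sets cover `U`, that neighbourhood has more than `k`
elements. -/

theorem exists_nbhd_covers_of_covers_pi {α S U : Type*} (X : Finset S) (N : α → S → Prop)
    (E : S → U → Prop) (hX : ∀ f : α → U, ∃ s ∈ X, ∃ a, N a s ∧ E s (f a)) :
    ∃ a, ∀ u, ∃ s ∈ X, N a s ∧ E s u := by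
  by_contra! hmiss
  choose f hf using hmiss
  obtain ⟨s, hsX, a, hN, hE⟩ := hX f
  exact hf a s hsX hN hE

/-- Let `I = (S, U, E)` be a set cover instance with `S` partitioned into
`S_1, …, S_k` (modelled as `S = Σ j, Sfam j`), `T = (A, B, E_T)` a bipartite graph with
`A` partitioned into `A_1, …, A_m` (modelled as `Σ i, Afam i`) and `B_j` identified with
`S_j`, and let `I'` be the product instance: universe `U' = Σ i, (Afam i → U)`, with `s`
adjacent to `⟨i, f⟩` iff there is `a ∈ A_i` with `{a, s} ∈ E_T` and `{s, f a} ∈ E`.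
Suppose no subset of `S` of cardinality at most `k` covers `U` in `I`.  Then for every
`X ⊆ S` covering `U'` in `I'` and every `i ∈ [m]`, there is a vertex `a ∈ A_i` having at
least `k+1` neighbors (in `T`) in `X` (i.e. some `Y ⊆ X` of cardinality at least `k+1`
all of whose elements are adjacent to `a` in `T`). -/
theorem product_soundness_claim
    (k m : ℕ) (Sfam : Fin k → Type) (U : Type)
    (E : (Σ j, Sfam j) → U → Prop)
    (Afam : Fin m → Type)
    (ET : (Σ i, Afam i) → (Σ j, Sfam j) → Prop)
    (hnocov : ¬ ∃ C : Finset (Σ j, Sfam j), C.card ≤ k ∧ ∀ u : U, ∃ s ∈ C, E s u)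
    (X : Finset (Σ j, Sfam j))
    (hX : ∀ u' : Σ i, (Afam i → U), ∃ s ∈ X,
      ∃ a : Afam u'.1, ET ⟨u'.1, a⟩ s ∧ E s (u'.2 a)) :
    ∀ i : Fin m, ∃ a : Afam i, ∃ Y : Finset (Σ j, Sfam j),
      Y ⊆ X ∧ k + 1 ≤ Y.card ∧ ∀ s ∈ Y, ET ⟨i, a⟩ s := by
  classical
  intro i
  obtain ⟨a, hcov⟩ :=
    exists_nbhd_covers_of_covers_pi X (fun a => ET ⟨i, a⟩) E (fun f => hX ⟨i, f⟩)
  refine ⟨a, X.filter (ET ⟨i, a⟩), Finset.filter_subset _ _, ?_,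
    fun s hs => (Finset.mem_filter.mp hs).2⟩
  by_contra! hsmall
  refine hnocov ⟨X.filter (ET ⟨i, a⟩), Nat.le_of_lt_succ hsmall, fun u => ?_⟩
  obtain ⟨s, hsX, hN, hE⟩ := hcov u
  exact ⟨s, Finset.mem_filter.mpr ⟨hsX, hN⟩, hE⟩
end

section
/- Let φ be a CNF formula whose variable set is partitioned into V_1, …, V_k, and let I'(φ) = (S', U', E') be the associated set cover instance. Then: (i) φ is satisfiable if and only if there exist s_1 ∈ S_1, …, s_k ∈ S_k such that {s_1, …, s_k} covers U'; and (ii) if φ is unsatisfiable, then every subset of S' covering U' has cardinality greater than k. -/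
/-!
A choice of one assignment `s_i ∈ S_i` for every part is the same thing as a global
assignment of `V`, and under this correspondence `{s_1, …, s_k}` covers a clause exactly when
the glued assignment satisfies it; the vertices `u_i` are covered automatically. A cover of size
at most `k` must hit every `u_i`, so by counting it picks exactly one element of each `S_i`,
and is therefore of the previous kind.
-/

/-- The adjacency relation of the set cover instance `I'(φ)` associated with a CNF
formula `φ` whose variables are partitioned into `k` parts via `part`.  The left side is
`S' = Σ i, ({v // part v = i} → Bool)` (assignments to the variables of the `i`-th part);
the universe is `{c // c ∈ φ} ⊕ Fin k` (the clauses of `φ` together with `k` additional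
vertices `u_1, …, u_k`).  An assignment `s ∈ S_i` is adjacent to `u_i`, and is adjacent
to a clause `c` iff some literal of `c` has its variable in the `i`-th part and is made
true by `s`. -/
def cnfAdj {k : ℕ} {V : Type} (part : V → Fin k) (φ : Finset (Finset (V × Bool)))
    (s : Σ i : Fin k, ({v : V // part v = i} → Bool))
    (u : {c // c ∈ φ} ⊕ Fin k) : Prop :=
  Sum.elim
    (fun c : {c // c ∈ φ} =>
      ∃ l ∈ c.val, ∃ hp : part l.1 = s.1, s.2 ⟨l.1, hp⟩ = l.2)
    (fun j : Fin k => s.1 = j) u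

open Finset

theorem Finset.exists_section_of_card_le {ι : Type*} [Fintype ι] {β : ι → Type*}
    {X : Finset (Σ i, β i)} (hsurj : ∀ i, ∃ x ∈ X, x.1 = i) (hcard : #X ≤ Fintype.card ι) :
    ∃ s : ∀ i, β i, ∀ x ∈ X, x = ⟨x.1, s x.1⟩ := by
  have hinj : Set.InjOn Sigma.fst (X : Set (Σ i, β i)) :=
    injOn_of_surjOn_of_card_le (t := univ) Sigma.fst (fun _ _ => mem_coe.2 (mem_univ _))
      (fun i _ => hsurj i) hcard
  have hfibre : ∀ i, ∃ b : β i, ⟨i, b⟩ ∈ X := by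
    intro i
    obtain ⟨⟨_, b⟩, hx, rfl⟩ := hsurj i
    exact ⟨b, hx⟩
  choose s hs using hfibre
  exact ⟨s, fun x hx => hinj hx (hs x.1) rfl⟩

section CNF

variable {k : ℕ} {V : Type} (part : V → Fin k) (φ : Finset (Finset (V × Bool)))

def glueAssignment (s : ∀ i : Fin k, ({v : V // part v = i} → Bool)) (v : V) : Bool :=
  s (part v) ⟨v, rfl⟩

theorem exists_cnfAdj_inl_iff (s : ∀ i : Fin k, ({v : V // part v = i} → Bool))
    (c : {c // c ∈ φ}) :
    (∃ i, cnfAdj part φ ⟨i, s i⟩ (.inl c)) ↔ ∃ l ∈ c.val, glueAssignment part s l.1 = l.2 := by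
  constructor
  · rintro ⟨i, l, hl, hp, hval⟩
    dsimp only at hp hval
    subst hp
    exact ⟨l, hl, hval⟩
  · rintro ⟨l, hl, hval⟩
    exact ⟨part l.1, l, hl, rfl, hval⟩

theorem satisfiable_iff_exists_section_covers :
    (∃ α : V → Bool, ∀ c ∈ φ, ∃ l ∈ c, α l.1 = l.2) ↔
      ∃ s : ∀ i : Fin k, ({v : V // part v = i} → Bool),
        ∀ u : {c // c ∈ φ} ⊕ Fin k, ∃ i : Fin k, cnfAdj part φ ⟨i, s i⟩ u := by
  constructor
  · rintro ⟨α, hα⟩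
    refine ⟨fun _ v => α v.1, ?_⟩
    rintro (⟨c, hc⟩ | j)
    · exact (exists_cnfAdj_inl_iff part φ _ ⟨c, hc⟩).2 (hα c hc)
    · exact ⟨j, rfl⟩
  · rintro ⟨s, hs⟩
    exact ⟨glueAssignment part s, fun c hc =>
      (exists_cnfAdj_inl_iff part φ s ⟨c, hc⟩).1 (hs (.inl ⟨c, hc⟩))⟩

theorem lt_card_of_covers (hunsat : ¬ ∃ α : V → Bool, ∀ c ∈ φ, ∃ l ∈ c, α l.1 = l.2)
    (X : Finset (Σ i : Fin k, ({v : V // part v = i} → Bool)))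
    (hX : ∀ u : {c // c ∈ φ} ⊕ Fin k, ∃ s ∈ X, cnfAdj part φ s u) : k < #X := by
  by_contra! hcard
  obtain ⟨s, hs⟩ := exists_section_of_card_le (fun j => hX (.inr j))
    (hcard.trans_eq (Fintype.card_fin k).symm)
  refine hunsat ((satisfiable_iff_exists_section_covers part φ).2 ⟨s, fun u => ?_⟩)
  obtain ⟨⟨i, b⟩, hx, hadj⟩ := hX u
  rw [hs _ hx] at hadj
  exact ⟨i, hadj⟩

end CNF

theorem cnf_setcover_correct_general
    (k : ℕ) (V : Type) (part : V → Fin k)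
    (φ : Finset (Finset (V × Bool))) :
    ((∃ α : V → Bool, ∀ c ∈ φ, ∃ l ∈ c, α l.1 = l.2) ↔
      (∃ s : ∀ i : Fin k, ({v : V // part v = i} → Bool),
        ∀ u : {c // c ∈ φ} ⊕ Fin k, ∃ i : Fin k, cnfAdj part φ ⟨i, s i⟩ u)) ∧
    ((¬ ∃ α : V → Bool, ∀ c ∈ φ, ∃ l ∈ c, α l.1 = l.2) →
      ∀ X : Finset (Σ i : Fin k, ({v : V // part v = i} → Bool)),
        (∀ u : {c // c ∈ φ} ⊕ Fin k, ∃ s ∈ X, cnfAdj part φ s u) →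
        k < X.card) :=
  ⟨satisfiable_iff_exists_section_covers part φ, lt_card_of_covers part φ⟩

/-- Let `φ` be a CNF formula whose variable set is partitioned into
`V_1, …, V_k`, and let `I'(φ) = (S', U', E')` be the associated set cover instance.  Then:
(i) `φ` is satisfiable iff there exist `s_1 ∈ S_1, …, s_k ∈ S_k` such that
`{s_1, …, s_k}` covers `U'`; and
(ii) if `φ` is unsatisfiable, then every subset of `S'` covering `U'` has cardinality
greater than `k`. -/
theorem cnf_setcover_correct
    (k : ℕ) (hk : 0 < k) (V : Type) (part : V → Fin k)
    (φ : Finset (Finset (V × Bool))) :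
    ((∃ α : V → Bool, ∀ c ∈ φ, ∃ l ∈ c, α l.1 = l.2) ↔
      (∃ s : ∀ i : Fin k, ({v : V // part v = i} → Bool),
        ∀ u : {c // c ∈ φ} ⊕ Fin k, ∃ i : Fin k, cnfAdj part φ ⟨i, s i⟩ u)) ∧
    ((¬ ∃ α : V → Bool, ∀ c ∈ φ, ∃ l ∈ c, α l.1 = l.2) →
      ∀ X : Finset (Σ i : Fin k, ({v : V // part v = i} → Bool)),
        (∀ u : {c // c ∈ φ} ⊕ Fin k, ∃ s ∈ X, cnfAdj part φ s u) →
        k < X.card) :=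
  cnf_setcover_correct_general k V part φ
end

section
/- Let k ≥ 1, M ∈ ℕ, d ≥ 1, and let S_1, …, S_k be sets of vectors in {−M, …, M}^d ⊆ ℤ^d, with associated set cover instance J. If there exist x_1 ∈ S_1, …, x_k ∈ S_k with x_1 + ⋯ + x_k = 0, then {x_1, …, x_k} covers the universe of J. -/
/-- `D = {(d_1, …, d_k) ∈ {−M, …, M}^k : d_1 + ⋯ + d_k = 0}`. -/
def VecD (k M : ℕ) : Type :=
  {a : Fin k → ℤ // (∀ i, |a i| ≤ (M : ℤ)) ∧ ∑ i, a i = 0}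

/-- The adjacency relation of the set cover instance `J` associated with sets
`S_1, …, S_k` of vectors in `{−M, …, M}^d ⊆ ℤ^d`: the left side is the disjoint union
`Σ i, {x // x ∈ Sfam i}`, the universe is `[d] × ([k]^D)`, and `x ∈ S_i` is adjacent to
`(j, u)` iff there exists `a ∈ D` with `u a = i` and `x j = a i`. -/
def vecAdj {k M d : ℕ} (Sfam : Fin k → Finset (Fin d → ℤ))
    (s : Σ i : Fin k, {x : Fin d → ℤ // x ∈ Sfam i})
    (u : Fin d × (VecD k M → Fin k)) : Prop :=
  ∃ a : VecD k M, u.2 a = s.1 ∧ s.2.val u.1 = a.val s.1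

def VecD.column {k M d : ℕ} (x : Fin k → Fin d → ℤ) (j : Fin d)
    (hbound : ∀ i, |x i j| ≤ (M : ℤ)) (hsum : ∑ i, x i = 0) : VecD k M :=
  ⟨fun i => x i j, hbound, by
    simpa only [Finset.sum_apply, Pi.zero_apply] using congrFun hsum j⟩

theorem vecsum_completeness_general (k M d : ℕ)
    (Sfam : Fin k → Finset (Fin d → ℤ))
    (hbound : ∀ i : Fin k, ∀ x ∈ Sfam i, ∀ j : Fin d, |x j| ≤ (M : ℤ))
    (x : Fin k → (Fin d → ℤ)) (hx : ∀ i, x i ∈ Sfam i)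
    (hsum : ∑ i, x i = 0) :
    ∀ u : Fin d × (VecD k M → Fin k), ∃ i : Fin k,
      vecAdj Sfam ⟨i, ⟨x i, hx i⟩⟩ u := by
  rintro ⟨j, u⟩
  let a : VecD k M := VecD.column x j (fun i => hbound i (x i) (hx i) j) hsum
  exact ⟨u a, a, rfl, rfl⟩

/-- Let `k ≥ 1`, `M ∈ ℕ`, `d ≥ 1`, and let `S_1, …, S_k` be sets of vectors
in `{−M, …, M}^d ⊆ ℤ^d`, with associated set cover instance `J`.  If there exist
`x_1 ∈ S_1, …, x_k ∈ S_k` with `x_1 + ⋯ + x_k = 0`, then `{x_1, …, x_k}` covers the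
universe of `J`. -/
theorem vecsum_completeness (k M d : ℕ) (hk : 1 ≤ k) (hd : 1 ≤ d)
    (Sfam : Fin k → Finset (Fin d → ℤ))
    (hbound : ∀ i : Fin k, ∀ x ∈ Sfam i, ∀ j : Fin d, |x j| ≤ (M : ℤ))
    (x : Fin k → (Fin d → ℤ)) (hx : ∀ i, x i ∈ Sfam i)
    (hsum : ∑ i, x i = 0) :
    ∀ u : Fin d × (VecD k M → Fin k), ∃ i : Fin k,
      vecAdj Sfam ⟨i, ⟨x i, hx i⟩⟩ u :=
  vecsum_completeness_general k M d Sfam hbound x hx hsum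
end

section
/- Let k ≥ 1, M ∈ ℕ, d ≥ 1, and let S_1, …, S_k be sets of vectors in {−M, …, M}^d ⊆ ℤ^d, with associated set cover instance J. If there are no x_1 ∈ S_1, …, x_k ∈ S_k with x_1 + ⋯ + x_k = 0, then every subset X of the disjoint union of S_1, …, S_k with |X| ≤ k fails to cover the universe of J; that is, every cover of the universe of J has cardinality greater than k. -/
open Finset

theorem Finset.exists_transversal_of_card_le {ι α : Type*} [Fintype ι] [DecidableEq ι]
    {S : ι → Finset α} (X : Finset (Σ i, {x // x ∈ S i}))
    (hX : ∀ i, ∃ s ∈ X, s.1 = i) (hcard : #X ≤ Fintype.card ι) :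
    ∃ x : ι → α, (∀ i, x i ∈ S i) ∧ ∀ s ∈ X, s.2.val = x s.1 := by
  choose g hgX hg1 using hX
  have himage : X.image Sigma.fst = univ :=
    eq_univ_of_forall fun i => mem_image.mpr ⟨g i, hgX i, hg1 i⟩
  have hinj : Set.InjOn Sigma.fst (X : Set (Σ i, {x // x ∈ S i})) := by
    refine injOn_of_card_image_eq (le_antisymm card_image_le ?_)
    rwa [himage, card_univ]
  refine ⟨fun i => (g i).2.val, fun i => congrArg S (hg1 i) ▸ (g i).2.property,
    fun s hs => ?_⟩
  show _ = (g s.1).2.val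
  rw [hinj (hgX s.1) hs (hg1 s.1)]

theorem VecD.exists_ne_of_sum_ne_zero {k M : ℕ} (a : VecD k M) {y : Fin k → ℤ}
    (hy : ∑ i, y i ≠ 0) : ∃ i, a.val i ≠ y i := by
  by_contra! h
  exact hy (by rw [← a.property.2]; exact sum_congr rfl fun i _ => (h i).symm)

theorem exists_mem_fst_eq_of_vecAdj_cover {k M d : ℕ} (hd : 1 ≤ d)
    {Sfam : Fin k → Finset (Fin d → ℤ)} {X : Finset (Σ i : Fin k, {x // x ∈ Sfam i})}
    (hcov : ∀ u : Fin d × (VecD k M → Fin k), ∃ s ∈ X, vecAdj Sfam s u) (i : Fin k) :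
    ∃ s ∈ X, s.1 = i := by
  obtain ⟨s, hs, _, hi, _⟩ := hcov (⟨0, hd⟩, fun _ => i)
  exact ⟨s, hs, hi.symm⟩

theorem vecsum_soundness_general (k M d : ℕ) (hd : 1 ≤ d)
    (Sfam : Fin k → Finset (Fin d → ℤ))
    (hno : ¬ ∃ x : Fin k → (Fin d → ℤ), (∀ i, x i ∈ Sfam i) ∧ ∑ i, x i = 0) :
    ∀ X : Finset (Σ i : Fin k, {x : Fin d → ℤ // x ∈ Sfam i}),
      (∀ u : Fin d × (VecD k M → Fin k), ∃ s ∈ X, vecAdj Sfam s u) →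
      k < X.card := by
  intro X hcov
  by_contra! hle
  obtain ⟨x, hxS, hXx⟩ := X.exists_transversal_of_card_le
    (exists_mem_fst_eq_of_vecAdj_cover hd hcov) (by simpa using hle)
  obtain ⟨j, hj⟩ : ∃ j, ∑ i, x i j ≠ 0 := by
    by_contra! h
    exact hno ⟨x, hxS, funext fun j => by simpa [Finset.sum_apply] using h j⟩
  choose u hu using fun a : VecD k M => a.exists_ne_of_sum_ne_zero hj
  obtain ⟨s, hs, a, hua, hsa⟩ := hcov (j, u)
  dsimp only at hua hsa
  exact hu a (by rw [hua, ← hsa, hXx s hs])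

/-- Let `k ≥ 1`, `M ∈ ℕ`, `d ≥ 1`, and let `S_1, …, S_k` be sets of vectors
in `{−M, …, M}^d ⊆ ℤ^d`, with associated set cover instance `J`.  If there are no
`x_1 ∈ S_1, …, x_k ∈ S_k` with `x_1 + ⋯ + x_k = 0`, then every cover of the universe of
`J` has cardinality greater than `k`. -/
theorem vecsum_soundness (k M d : ℕ) (hk : 1 ≤ k) (hd : 1 ≤ d)
    (Sfam : Fin k → Finset (Fin d → ℤ))
    (hbound : ∀ i : Fin k, ∀ x ∈ Sfam i, ∀ j : Fin d, |x j| ≤ (M : ℤ))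
    (hno : ¬ ∃ x : Fin k → (Fin d → ℤ), (∀ i, x i ∈ Sfam i) ∧ ∑ i, x i = 0) :
    ∀ X : Finset (Σ i : Fin k, {x : Fin d → ℤ // x ∈ Sfam i}),
      (∀ u : Fin d × (VecD k M → Fin k), ∃ s ∈ X, vecAdj Sfam s u) →
      k < X.card :=
  vecsum_soundness_general k M d hd Sfam hno
end

section
/- Let k ≥ 2, let G be a graph whose vertex set is partitioned into V_1, …, V_k with each V_i an independent set and every edge joining two distinct parts, let L ≥ 1, encode : V(G) → {0,1}^L injective, and σ_i : [k]∖{i} → [k−1] a bijection for each i ∈ [k], with associated set cover instance J(G). If v_1 ∈ V_1, …, v_k ∈ V_k are pairwise adjacent in G (i.e., they form a k-clique), then the set X = {{v_i, v_j} : 1 ≤ i < j ≤ k} of its C(k,2) edges covers the universe of J(G). -/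
/-- The adjacency relation of the set cover instance `J(G)` associated with a graph `G`
whose vertices are partitioned into `V_1, …, V_k` via `part`: the left side is `E(G)`,
the universe is `[k] × ([k−1]^{0,1}) × [L]`, and an edge `{v, w}` with `v ∈ V_i`,
`w ∈ V_j` (`i ≠ j`) is adjacent to `(i', f, ℓ)` iff (`i' = i` and
`f (encode v ℓ) = σ_i j`) or (`i' = j` and `f (encode w ℓ) = σ_j i`). -/
def edgeAdj {V : Type} {k L : ℕ} (part : V → Fin k)
    (encode : V → Fin L → Bool)
    (σ : (i : Fin k) → {j : Fin k // j ≠ i} → Fin (k - 1))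
    (e : Sym2 V) (u : Fin k × (Bool → Fin (k - 1)) × Fin L) : Prop :=
  ∃ v w : V, e = s(v, w) ∧ part v = u.1 ∧
    ∃ hw : part w ≠ u.1, u.2.1 (encode v u.2.2) = σ u.1 ⟨part w, hw⟩

theorem edgeAdj_mk_of_eq {V : Type} {k L : ℕ} {part : V → Fin k} {encode : V → Fin L → Bool}
    {σ : (i : Fin k) → {j : Fin k // j ≠ i} → Fin (k - 1)} {a b : V}
    {u : Fin k × (Bool → Fin (k - 1)) × Fin L} (ha : part a = u.1) (hb : part b ≠ u.1)
    (h : u.2.1 (encode a u.2.2) = σ u.1 ⟨part b, hb⟩) :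
    edgeAdj part encode σ s(a, b) u :=
  ⟨a, b, rfl, ha, hb, h⟩

/-- The witness `j` is `σ_i⁻¹ (f (encode a ℓ))` for `u = (i, f, ℓ)`. -/
theorem exists_edgeAdj_mk_of_surjective {V : Type} {k L : ℕ} {part : V → Fin k}
    {encode : V → Fin L → Bool} {σ : (i : Fin k) → {j : Fin k // j ≠ i} → Fin (k - 1)}
    {u : Fin k × (Bool → Fin (k - 1)) × Fin L} (hσ : Function.Surjective (σ u.1))
    {a : V} (ha : part a = u.1) {w : Fin k → V} (hw : ∀ j, part (w j) = j) :
    ∃ j, j ≠ u.1 ∧ edgeAdj part encode σ s(a, w j) u := by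
  obtain ⟨⟨j, hj⟩, hσj⟩ := hσ (u.2.1 (encode a u.2.2))
  refine ⟨j, hj, edgeAdj_mk_of_eq ha (by rwa [hw j]) ?_⟩
  rw [← hσj]
  exact congrArg (σ u.1) (Subtype.ext (hw j).symm)

theorem clique_covers_general
    (k L : ℕ)
    (V : Type)
    (part : V → Fin k)
    (encode : V → Fin L → Bool)
    (σ : (i : Fin k) → {j : Fin k // j ≠ i} → Fin (k - 1))
    (hσ : ∀ i, Function.Bijective (σ i))
    (v : Fin k → V) (hv : ∀ i, part (v i) = i) :
    ∀ u : Fin k × (Bool → Fin (k - 1)) × Fin L,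
      ∃ i j : Fin k, i ≠ j ∧ edgeAdj part encode σ (s(v i, v j)) u := by
  intro u
  obtain ⟨j, hj, hcover⟩ :=
    exists_edgeAdj_mk_of_surjective (encode := encode) (hσ u.1).surjective (hv u.1) hv
  exact ⟨u.1, j, hj.symm, hcover⟩

/-- Let `k ≥ 2`, `G` a graph whose vertex set is partitioned into
`V_1, …, V_k` with each `V_i` independent and every edge joining two distinct parts,
`L ≥ 1`, `encode : V(G) → {0,1}^L` injective, and `σ_i : [k]∖{i} → [k−1]` a bijection
for each `i`, with associated set cover instance `J(G)`.  If `v_1 ∈ V_1, …, v_k ∈ V_k`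
form a `k`-clique, then the set `X = {{v_i, v_j} : i ≠ j}` of its edges covers the
universe of `J(G)`: every universe element is adjacent to some edge `{v_i, v_j}`. -/
theorem clique_covers
    (k L : ℕ) (hk : 2 ≤ k) (hL : 1 ≤ L)
    (V : Type) (G : SimpleGraph V)
    (part : V → Fin k)
    (hpart : ∀ v w : V, G.Adj v w → part v ≠ part w)
    (encode : V → Fin L → Bool) (henc : Function.Injective encode)
    (σ : (i : Fin k) → {j : Fin k // j ≠ i} → Fin (k - 1))
    (hσ : ∀ i, Function.Bijective (σ i))
    (v : Fin k → V) (hv : ∀ i, part (v i) = i)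
    (hclique : ∀ i j, i ≠ j → G.Adj (v i) (v j)) :
    ∀ u : Fin k × (Bool → Fin (k - 1)) × Fin L,
      ∃ i j : Fin k, i ≠ j ∧ edgeAdj part encode σ (s(v i, v j)) u :=
  clique_covers_general k L V part encode σ hσ v hv
end

section
/- Let k ≥ 2, let G be a graph whose vertex set is partitioned into V_1, …, V_k with each V_i an independent set and every edge joining two distinct parts, let L ≥ 1, encode : V(G) → {0,1}^L injective, and σ_i : [k]∖{i} → [k−1] a bijection for each i ∈ [k], with associated set cover instance J(G). If X ⊆ E(G) covers the universe of J(G) and |X| ≤ C(k,2), then there exist v_1 ∈ V_1, …, v_k ∈ V_k that are pairwise adjacent in G (i.e., G contains a k-clique). -/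
/-!
Every pair of parts `{i, j}` is covered through the element `(i, const (σ_i j), ℓ)`, so
`X` meets all `C(k, 2)` pairs of parts and hence, by counting, contains exactly one edge
between any two parts. If two edges of `X` leaving `V_i` started at different vertices,
whose encodings differ at a bit `ℓ`, then each bit value is carried by the start of fewer
than `k - 1` of these edges, so some `f : {0,1} → [k-1]` avoids all their labels
`σ_i j` and `(i, f, ℓ)` would be uncovered. Thus all edges of `X` at `V_i` share one
endpoint `v_i`, and the `v_i` are pairwise adjacent.
-/

open Finset

theorem exists_forall_comp_ne_of_ne {M β T : Type*} [Fintype M] [Fintype T]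
    (hcard : Fintype.card M ≤ Fintype.card T) (c : M → β) (τ : M → T) {m₁ m₂ : M}
    (h : c m₁ ≠ c m₂) : ∃ f : β → T, ∀ m, f (c m) ≠ τ m := by
  classical
  have hmiss (b : β) : ∃ t, t ∉ (univ.filter (c · = b)).image τ := by
    have hproper : univ.filter (c · = b) ⊂ univ := by
      refine filter_ssubset.2 ?_
      by_cases h₁ : c m₁ = b
      · exact ⟨m₂, mem_univ _, fun h₂ => h (h₁.trans h₂.symm)⟩
      · exact ⟨m₁, mem_univ _, h₁⟩
    by_contra! hall
    have := calc Fintype.card T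
        _ = #((univ.filter (c · = b)).image τ) := by rw [eq_univ_of_forall hall, card_univ]
        _ ≤ #(univ.filter (c · = b)) := card_image_le
        _ < #univ := card_lt_card hproper
        _ = Fintype.card M := card_univ
    omega
  choose f hf using hmiss
  exact ⟨f, fun m hm => hf (c m) (mem_image.2 ⟨m, by simp, hm.symm⟩)⟩

theorem Finset.injOn_of_subset_image_of_card_le {α β : Type*} [DecidableEq β] {s : Finset α}
    {t : Finset β} {f : α → β} (ht : t ⊆ s.image f) (hcard : #s ≤ #t) : Set.InjOn f s :=
  card_image_iff.1 <| le_antisymm card_image_le <| hcard.trans (card_le_card ht)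

theorem eq_of_injOn_sym2Map {α ι : Type*} {f : α → ι} {X : Set (Sym2 α)}
    (hinj : Set.InjOn (Sym2.map f) X) {v w v' w' : α} (h : s(v, w) ∈ X) (h' : s(v', w') ∈ X)
    (hv : f v = f v') (hw : f w = f w') (hvw : f v ≠ f w) : v = v' := by
  rcases Sym2.eq_iff.1 (hinj h h' (by simp [hv, hw])) with ⟨hv', -⟩ | ⟨-, hw'⟩
  · exact hv'
  · exact absurd (hv.trans (congrArg f hw'.symm)) hvw

section SetCover

variable {V : Type} {k L : ℕ} {part : V → Fin k} {encode : V → Fin L → Bool}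
  {σ : (i : Fin k) → {j : Fin k // j ≠ i} → Fin (k - 1)} {X : Finset (Sym2 V)}

variable (part encode σ) in
def Covers (X : Finset (Sym2 V)) : Prop :=
  ∀ u : Fin k × (Bool → Fin (k - 1)) × Fin L, ∃ e ∈ X, edgeAdj part encode σ e u

theorem Covers.exists_mem {i j : Fin k} (hX : Covers part encode σ X)
    (hσ : Function.Injective (σ i)) (ℓ : Fin L) (hji : j ≠ i) :
    ∃ v w, s(v, w) ∈ X ∧ part v = i ∧ part w = j := by
  obtain ⟨e, he, v, w, rfl, hv, hw, hσw⟩ := hX (i, fun _ => σ i ⟨j, hji⟩, ℓ)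
  exact ⟨v, w, he, hv, congrArg Subtype.val (hσ hσw).symm⟩

theorem Covers.injOn_map (hX : Covers part encode σ X) (hσ : ∀ i, Function.Injective (σ i))
    (ℓ : Fin L) (hcard : #X ≤ k.choose 2) : Set.InjOn (Sym2.map part) X := by
  classical
  refine injOn_of_subset_image_of_card_le (t := (⊤ : SimpleGraph (Fin k)).edgeFinset) ?_ ?_
  · intro p hp
    induction p with
    | _ i j =>
      obtain ⟨v, w, hvw, rfl, rfl⟩ := hX.exists_mem (hσ j) ℓ (by simpa using hp)
      exact mem_image.2 ⟨_, hvw, Sym2.eq_swap⟩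
  · rwa [SimpleGraph.card_edgeFinset_top_eq_card_choose_two, Fintype.card_fin]

theorem Covers.eq_of_mem (hX : Covers part encode σ X) (henc : Function.Injective encode)
    (hinj : Set.InjOn (Sym2.map part) X) {v w v' w' : V}
    (hσ : Function.Injective (σ (part v))) (h : s(v, w) ∈ X) (h' : s(v', w') ∈ X)
    (hv : part v = part v') (hw : part w ≠ part v) (hw' : part w' ≠ part v') : v = v' := by
  by_contra hne
  obtain ⟨ℓ, hℓ⟩ := Function.ne_iff.1 (henc.ne hne)
  choose tail head htail hpt hph using
    fun m : {j // j ≠ part v} => hX.exists_mem hσ ℓ m.2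
  have eq_tail {x y : V} (hxy : s(x, y) ∈ X) (hx : part x = part v) (hy : part y ≠ part v) :
      x = tail ⟨part y, hy⟩ :=
    eq_of_injOn_sym2Map hinj hxy (htail _) (hx.trans (hpt _).symm) (hph ⟨_, hy⟩).symm
      (hx ▸ hy.symm)
  have hcard : Fintype.card {j // j ≠ part v} ≤ Fintype.card (Fin (k - 1)) := by simp
  obtain ⟨f, hf⟩ := exists_forall_comp_ne_of_ne hcard (fun m => encode (tail m) ℓ) (σ (part v))
    (m₁ := ⟨part w, hw⟩) (m₂ := ⟨part w', hv ▸ hw'⟩)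
    (by rwa [← eq_tail h rfl, ← eq_tail h' hv.symm])
  obtain ⟨e, he, x, y, rfl, hx, hy, hfxy⟩ := hX (part v, f, ℓ)
  exact hf ⟨part y, hy⟩ (eq_tail he hx hy ▸ hfxy)

end SetCover

theorem cover_gives_clique_general
    (k L : ℕ) (hk : 2 ≤ k) (hL : 1 ≤ L)
    (V : Type) (G : SimpleGraph V)
    (part : V → Fin k)
    (encode : V → Fin L → Bool) (henc : Function.Injective encode)
    (σ : (i : Fin k) → {j : Fin k // j ≠ i} → Fin (k - 1))
    (hσ : ∀ i, Function.Bijective (σ i))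
    (X : Finset (Sym2 V)) (hXE : ∀ e ∈ X, e ∈ G.edgeSet)
    (hXcov : ∀ u : Fin k × (Bool → Fin (k - 1)) × Fin L,
      ∃ e ∈ X, edgeAdj part encode σ e u)
    (hXcard : X.card ≤ Nat.choose k 2) :
    ∃ v : Fin k → V, (∀ i, part (v i) = i) ∧
      ∀ i j, i ≠ j → G.Adj (v i) (v j) := by
  have hX : Covers part encode σ X := hXcov
  have hσ' i := (hσ i).injective
  have ℓ₀ : Fin L := ⟨0, hL⟩
  have hinj := hX.injOn_map hσ' ℓ₀ hXcard
  have := Fin.nontrivial_iff_two_le.2 hk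
  choose other hother using fun i : Fin k => exists_ne i
  choose x y hxy hx hy using fun i => hX.exists_mem (hσ' i) ℓ₀ (hother i)
  refine ⟨x, hx, fun i j hij => ?_⟩
  obtain ⟨a, b, hab, ha, hb⟩ := hX.exists_mem (hσ' i) ℓ₀ hij.symm
  have hax : a = x i := hX.eq_of_mem henc hinj (hσ' _) hab (hxy i) (by rw [ha, hx])
    (by rw [ha, hb]; exact hij.symm) (by rw [hx, hy]; exact hother i)
  have hbx : b = x j := hX.eq_of_mem henc hinj (hσ' _) (Sym2.eq_swap ▸ hab) (hxy j)
    (by rw [hb, hx]) (by rw [ha, hb]; exact hij) (by rw [hx, hy]; exact hother j)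
  exact hax ▸ hbx ▸ hXE _ hab

/-- Let `k ≥ 2`, `G` a graph whose vertex set is partitioned into
`V_1, …, V_k` with each `V_i` independent and every edge joining two distinct parts,
`L ≥ 1`, `encode : V(G) → {0,1}^L` injective, and `σ_i : [k]∖{i} → [k−1]` a bijection
for each `i`, with associated set cover instance `J(G)`.  If `X ⊆ E(G)` covers the
universe of `J(G)` and `|X| ≤ C(k,2)`, then there exist `v_1 ∈ V_1, …, v_k ∈ V_k`
that are pairwise adjacent in `G` (i.e. `G` contains a `k`-clique). -/
theorem cover_gives_clique
    (k L : ℕ) (hk : 2 ≤ k) (hL : 1 ≤ L)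
    (V : Type) (G : SimpleGraph V)
    (part : V → Fin k)
    (hpart : ∀ v w : V, G.Adj v w → part v ≠ part w)
    (encode : V → Fin L → Bool) (henc : Function.Injective encode)
    (σ : (i : Fin k) → {j : Fin k // j ≠ i} → Fin (k - 1))
    (hσ : ∀ i, Function.Bijective (σ i))
    (X : Finset (Sym2 V)) (hXE : ∀ e ∈ X, e ∈ G.edgeSet)
    (hXcov : ∀ u : Fin k × (Bool → Fin (k - 1)) × Fin L,
      ∃ e ∈ X, edgeAdj part encode σ e u)
    (hXcard : X.card ≤ Nat.choose k 2) :
    ∃ v : Fin k → V, (∀ i, part (v i) = i) ∧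
      ∀ i j, i ≠ j → G.Adj (v i) (v j) :=
  cover_gives_clique_general k L hk hL V G part encode henc σ hσ X hXE hXcov hXcard
end

section
/- Let k ≥ 2, let G be a graph whose vertex set is partitioned into V_1, …, V_k with each V_i an independent set and every edge joining two distinct parts, let L ≥ 1, encode : V(G) → {0,1}^L injective, and σ_i : [k]∖{i} → [k−1] a bijection for each i ∈ [k], with associated set cover instance J(G). If X ⊆ E(G) covers the universe of J(G) and |X| ≤ C(k,2), then for every pair {i, j} with 1 ≤ i < j ≤ k, X contains exactly one edge with one endpoint in V_i and the other in V_j. -/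
/-- Let `k ≥ 2`, `G` a graph whose vertex set is partitioned into
`V_1, …, V_k` with each `V_i` independent and every edge joining two distinct parts,
`L ≥ 1`, `encode : V(G) → {0,1}^L` injective, and `σ_i : [k]∖{i} → [k−1]` a bijection
for each `i`, with associated set cover instance `J(G)`.  If `X ⊆ E(G)` covers the
universe of `J(G)` and `|X| ≤ C(k,2)`, then for every pair `{i, j}` with `i < j`, `X`
contains exactly one edge with one endpoint in `V_i` and the other in `V_j`. -/
theorem cover_one_edge_per_pair
    (k L : ℕ) (hk : 2 ≤ k) (hL : 1 ≤ L)
    (V : Type) (G : SimpleGraph V)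
    (part : V → Fin k)
    (hpart : ∀ v w : V, G.Adj v w → part v ≠ part w)
    (encode : V → Fin L → Bool) (henc : Function.Injective encode)
    (σ : (i : Fin k) → {j : Fin k // j ≠ i} → Fin (k - 1))
    (hσ : ∀ i, Function.Bijective (σ i))
    (X : Finset (Sym2 V)) (hXE : ∀ e ∈ X, e ∈ G.edgeSet)
    (hXcov : ∀ u : Fin k × (Bool → Fin (k - 1)) × Fin L,
      ∃ e ∈ X, edgeAdj part encode σ e u)
    (hXcard : X.card ≤ Nat.choose k 2) :
    ∀ i j : Fin k, i < j →
      ∃! e : Sym2 V, e ∈ X ∧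
        ∃ x y : V, e = s(x, y) ∧ part x = i ∧ part y = j := by
  intro i j hij
  classical
  have hji : j ≠ i := hij.ne'
  set f : Sym2 V → Sym2 (Fin k) := Sym2.map part with hf
  set ND : Finset (Sym2 (Fin k)) := Finset.univ.filter (fun p => ¬ p.IsDiag) with hND
  have hNDcard : ND.card = Nat.choose k 2 := by
    have h := Sym2.card_subtype_not_diag (α := Fin k)
    rw [Fintype.card_subtype] at h
    simpa [hND, Fintype.card_fin] using h
  -- existence of an edge for each non-diagonal pair
  have hex : ∀ p ∈ ND, ∃ e ∈ X, f e = p := by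
    intro p hp
    induction p using Sym2.inductionOn with
    | hf a b =>
      have hab : a ≠ b := by simpa [hND] using hp
      obtain ⟨e, heX, v, w, hev, hv, hw, hσeq⟩ :=
        hXcov (a, (fun _ => σ a ⟨b, hab.symm⟩), ⟨0, hL⟩)
      refine ⟨e, heX, ?_⟩
      have hwb : part w = b := by
        have := (hσ a).injective hσeq
        exact (congrArg Subtype.val this).symm
      simp [hf, hev, Sym2.map_pair_eq, hv, hwb]
  have hsub1 : ND ⊆ X.image f := by
    intro p hp
    obtain ⟨e, he, hfe⟩ := hex p hp
    exact Finset.mem_image.mpr ⟨e, he, hfe⟩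
  have hsub2 : X.image f ⊆ ND := by
    intro p hp
    obtain ⟨e, he, hfe⟩ := Finset.mem_image.mp hp
    induction e using Sym2.inductionOn with
    | hf x y =>
      have hadj : G.Adj x y := (hXE _ he)
      have hxy : part x ≠ part y := hpart x y hadj
      subst hfe
      simp [hND, hf, Sym2.map_pair_eq, hxy]
  have himg : X.image f = ND := le_antisymm hsub2 hsub1
  have hcard : (X.image f).card = X.card := by
    have h1 : (X.image f).card ≤ X.card := Finset.card_image_le
    have h2 : X.card ≤ (X.image f).card := by
      rw [himg, hNDcard]; exact hXcard
    omega
  have hinj : Set.InjOn f X := Finset.injOn_of_card_image_eq hcard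
  -- the pair s(i,j) is non-diagonal
  have hpij : s(i, j) ∈ ND := by simp [hND, hij.ne]
  obtain ⟨e, heX, hfe⟩ := hex _ hpij
  refine ⟨e, ⟨heX, ?_⟩, ?_⟩
  · -- extract endpoints
    induction e using Sym2.inductionOn with
    | hf x y =>
      rw [hf, Sym2.map_pair_eq, Sym2.eq_iff] at hfe
      rcases hfe with ⟨h1, h2⟩ | ⟨h1, h2⟩
      · exact ⟨x, y, rfl, h1, h2⟩
      · exact ⟨y, x, Sym2.eq_swap, h2, h1⟩
  · rintro e' ⟨he'X, x, y, rfl, hx, hy⟩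
    apply hinj he'X heX
    rw [hfe, hf, Sym2.map_pair_eq, hx, hy]
end

section
/- Let k ≥ 2, let G be a graph whose vertex set is partitioned into V_1, …, V_k with each V_i an independent set and every edge joining two distinct parts, let L ≥ 1, encode : V(G) → {0,1}^L injective, and σ_i : [k]∖{i} → [k−1] a bijection for each i ∈ [k], with associated set cover instance J(G). Suppose X ⊆ E(G) covers the universe of J(G) and for every pair {i, j} with 1 ≤ i < j ≤ k, X contains exactly one edge between V_i and V_j. Then for every i ∈ [k] and all distinct j, j' ∈ [k]∖{i}, the unique edge of X between V_i and V_j and the unique edge of X between V_i and V_{j'} have the same endpoint in V_i; consequently, for every i ∈ [k] there is a vertex v_i ∈ V_i that is an endpoint of every edge of X incident to V_i. -/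
namespace SetCoverInstance

variable {V : Type} {k L : ℕ} {part : V → Fin k} {encode : V → Fin L → Bool}
  {σ : (i : Fin k) → {j : Fin k // j ≠ i} → Fin (k - 1)} {X : Finset (Sym2 V)}

def EdgeBetween (part : V → Fin k) (i j : Fin k) (e : Sym2 V) : Prop :=
  ∃ x y : V, e = s(x, y) ∧ part x = i ∧ part y = j

theorem EdgeBetween.symm {i j : Fin k} {e : Sym2 V} (h : EdgeBetween part i j e) :
    EdgeBetween part j i e := by
  obtain ⟨x, y, rfl, hx, hy⟩ := h
  exact ⟨y, x, Sym2.eq_swap, hy, hx⟩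

theorem existsUnique_edgeBetween_of_ne
    (huniq : ∀ i j : Fin k, i < j → ∃! e, e ∈ X ∧ EdgeBetween part i j e)
    {i j : Fin k} (hij : i ≠ j) : ∃! e, e ∈ X ∧ EdgeBetween part i j e := by
  rcases hij.lt_or_gt with h | h
  · exact huniq i j h
  · obtain ⟨e, ⟨he, hji⟩, hu⟩ := huniq j i h
    exact ⟨e, ⟨he, hji.symm⟩, fun e' ⟨he', hij'⟩ => hu e' ⟨he', hij'.symm⟩⟩

theorem left_eq_of_existsUnique_edgeBetween {i j : Fin k} (hij : i ≠ j)
    (huniq : ∃! e, e ∈ X ∧ EdgeBetween part i j e) {v w x y : V}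
    (hvw : s(v, w) ∈ X) (hv : part v = i) (hw : part w = j)
    (hxy : s(x, y) ∈ X) (hx : part x = i) (hy : part y = j) : v = x := by
  have hsame : s(v, w) = s(x, y) :=
    huniq.unique ⟨hvw, v, w, rfl, hv, hw⟩ ⟨hxy, x, y, rfl, hx, hy⟩
  rcases Sym2.eq_iff.mp hsame with ⟨hvx, -⟩ | ⟨hvy, -⟩
  · exact hvx
  · exact absurd (hv.symm.trans (hvy ▸ hy)) hij

theorem left_eq_of_covers (henc : Function.Injective encode) {i : Fin k}
    (hσ : Function.Injective (σ i)) (hXcov : ∀ u, ∃ e ∈ X, edgeAdj part encode σ e u)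
    (huniq : ∀ i j : Fin k, i < j → ∃! e, e ∈ X ∧ EdgeBetween part i j e)
    {j j' : Fin k} (hj : j ≠ i) (hj' : j' ≠ i) {x y x' y' : V}
    (hxy : s(x, y) ∈ X) (hx : part x = i) (hy : part y = j)
    (hxy' : s(x', y') ∈ X) (hx' : part x' = i) (hy' : part y' = j') : x = x' := by
  refine henc (funext fun ℓ => ?_)
  by_contra hbit
  let f : Bool → Fin (k - 1) := fun b => if b = encode x ℓ then σ i ⟨j', hj'⟩ else σ i ⟨j, hj⟩
  obtain ⟨e, he, v, w, rfl, hv, hw, hf⟩ := hXcov (i, f, ℓ)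
  dsimp only at hv hw hf
  by_cases hvx : encode v ℓ = encode x ℓ
  · have hwj' : part w = j' := congrArg Subtype.val (hσ (by simpa [f, hvx] using hf.symm))
    have hv_eq : v = x' :=
      left_eq_of_existsUnique_edgeBetween hj'.symm
        (existsUnique_edgeBetween_of_ne huniq hj'.symm) he hv hwj' hxy' hx' hy'
    exact hbit (hv_eq ▸ hvx).symm
  · have hwj : part w = j := congrArg Subtype.val (hσ (by simpa [f, hvx] using hf.symm))
    have hv_eq : v = x := left_eq_of_existsUnique_edgeBetween hj.symm
      (existsUnique_edgeBetween_of_ne huniq hj.symm) he hv hwj hxy hx hy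
    exact hvx (by rw [hv_eq])

end SetCoverInstance

open SetCoverInstance in
theorem cover_edges_share_endpoints_general
    (k L : ℕ) (hk : 2 ≤ k)
    (V : Type) (G : SimpleGraph V)
    (part : V → Fin k)
    (hpart : ∀ v w : V, G.Adj v w → part v ≠ part w)
    (encode : V → Fin L → Bool) (henc : Function.Injective encode)
    (σ : (i : Fin k) → {j : Fin k // j ≠ i} → Fin (k - 1))
    (hσ : ∀ i, Function.Bijective (σ i))
    (X : Finset (Sym2 V)) (hXE : ∀ e ∈ X, e ∈ G.edgeSet)
    (hXcov : ∀ u : Fin k × (Bool → Fin (k - 1)) × Fin L,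
      ∃ e ∈ X, edgeAdj part encode σ e u)
    (huniq : ∀ i j : Fin k, i < j →
      ∃! e : Sym2 V, e ∈ X ∧
        ∃ x y : V, e = s(x, y) ∧ part x = i ∧ part y = j) :
    (∀ i j j' : Fin k, j ≠ i → j' ≠ i → j ≠ j' →
      ∀ e ∈ X, ∀ e' ∈ X,
        (∃ x y : V, e = s(x, y) ∧ part x = i ∧ part y = j) →
        (∃ x y : V, e' = s(x, y) ∧ part x = i ∧ part y = j') →
        ∃ z : V, part z = i ∧ z ∈ e ∧ z ∈ e') ∧
    (∀ i : Fin k, ∃ z : V, part z = i ∧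
      ∀ e ∈ X, (∃ x ∈ e, part x = i) → z ∈ e) := by
  refine ⟨?_, fun i => ?_⟩
  · rintro i j j' hj hj' - e he e' he' ⟨x, y, rfl, hx, hy⟩ ⟨x', y', rfl, hx', hy'⟩
    obtain rfl := left_eq_of_covers henc (hσ i).injective hXcov huniq hj hj' he hx hy he' hx' hy'
    exact ⟨x, hx, Sym2.mem_mk_left _ _, Sym2.mem_mk_left _ _⟩
  · have := Fin.nontrivial_iff_two_le.mpr hk
    obtain ⟨j₀, hj₀⟩ := exists_ne i
    obtain ⟨e₀, ⟨he₀, x₀, y₀, rfl, hx₀, hy₀⟩, -⟩ := existsUnique_edgeBetween_of_ne huniq hj₀.symm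
    refine ⟨x₀, hx₀, ?_⟩
    rintro e he ⟨x, hxe, hx⟩
    obtain ⟨y, rfl⟩ := Sym2.mem_iff_exists.mp hxe
    have hy : part y ≠ i := hx ▸ (hpart x y (G.mem_edgeSet.mp (hXE _ he))).symm
    rw [left_eq_of_covers henc (hσ i).injective hXcov huniq hy hj₀ he hx rfl he₀ hx₀ hy₀]
    exact Sym2.mem_mk_left _ _

/-- Let `k ≥ 2`, `G` a graph whose vertex set is partitioned into
`V_1, …, V_k` with each `V_i` independent and every edge joining two distinct parts,
`L ≥ 1`, `encode : V(G) → {0,1}^L` injective, and `σ_i : [k]∖{i} → [k−1]` a bijection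
for each `i`, with associated set cover instance `J(G)`.  Suppose `X ⊆ E(G)` covers the
universe of `J(G)` and for every pair `{i, j}` with `i < j`, `X` contains exactly one
edge between `V_i` and `V_j`.  Then (a) for every `i` and all distinct `j, j' ≠ i`, the
unique edge of `X` between `V_i` and `V_j` and the unique edge of `X` between `V_i` and
`V_{j'}` share their endpoint in `V_i`; consequently (b) for every `i` there is a vertex
`v_i ∈ V_i` that is an endpoint of every edge of `X` incident to `V_i`. -/
theorem cover_edges_share_endpoints
    (k L : ℕ) (hk : 2 ≤ k) (hL : 1 ≤ L)
    (V : Type) (G : SimpleGraph V)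
    (part : V → Fin k)
    (hpart : ∀ v w : V, G.Adj v w → part v ≠ part w)
    (encode : V → Fin L → Bool) (henc : Function.Injective encode)
    (σ : (i : Fin k) → {j : Fin k // j ≠ i} → Fin (k - 1))
    (hσ : ∀ i, Function.Bijective (σ i))
    (X : Finset (Sym2 V)) (hXE : ∀ e ∈ X, e ∈ G.edgeSet)
    (hXcov : ∀ u : Fin k × (Bool → Fin (k - 1)) × Fin L,
      ∃ e ∈ X, edgeAdj part encode σ e u)
    (huniq : ∀ i j : Fin k, i < j →
      ∃! e : Sym2 V, e ∈ X ∧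
        ∃ x y : V, e = s(x, y) ∧ part x = i ∧ part y = j) :
    (∀ i j j' : Fin k, j ≠ i → j' ≠ i → j ≠ j' →
      ∀ e ∈ X, ∀ e' ∈ X,
        (∃ x y : V, e = s(x, y) ∧ part x = i ∧ part y = j) →
        (∃ x y : V, e' = s(x, y) ∧ part x = i ∧ part y = j') →
        ∃ z : V, part z = i ∧ z ∈ e ∧ z ∈ e') ∧
    (∀ i : Fin k, ∃ z : V, part z = i ∧
      ∀ e ∈ X, (∃ x ∈ e, part x = i) → z ∈ e) :=
  cover_edges_share_endpoints_general k L hk V G part hpart encode henc σ hσ X hXE hXcov huniq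
end
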